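/- arXiv:2302.13867 — 6 statements merged into one kernel-verified Lean document; each statement's English description precedes it below -/
import Mathlib

section
/- For all natural numbers n and sequences a, b in a commutative ring, Σ_{i=0}^n C(n,i) Σ_{k=0}^i Σ_{j=0}^k C(i,k) C(k,j) a_k b_{i-j} = (Σ_{s=0}^n C(n,s) a_s) · (Σ_{t=0}^n C(n,t) b_t). -/
/-!
Exchange the sums over `i` and `k` and use `C(n,i) C(i,k) = C(n,k) C(n-k,i-k)`: after the
reflection `j ↦ k - j`, the coefficient of `C(n,k) a_k` becomes
`∑_{d,e} C(n-k,d) C(k,e) b_{d+e}`. This equals `∑_t C(n,t) b_t`, being the image of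
`(1+X)^(n-k) (1+X)^k = (1+X)^n` under the linear functional `X^t ↦ b_t`.
-/

open Finset Polynomial

section

variable {R : Type*} [CommSemiring R]

noncomputable def umbralEval (f : ℕ → R) : R[X] →ₗ[R] R :=
  lsum fun t => LinearMap.mulRight R (f t)

theorem umbralEval_monomial (f : ℕ → R) (t : ℕ) (c : R) :
    umbralEval f (monomial t c) = c * f t := by
  simp [umbralEval, sum_monomial_index]

theorem X_add_one_pow_eq_sum_monomial (n : ℕ) :
    (X + 1 : R[X]) ^ n = ∑ t ∈ range (n + 1), monomial t (n.choose t : R) := by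
  simp [add_pow, ← C_mul_X_pow_eq_monomial, mul_comm]

theorem umbralEval_X_add_one_pow (f : ℕ → R) (n : ℕ) :
    umbralEval f ((X + 1) ^ n) = ∑ t ∈ range (n + 1), (n.choose t : R) * f t := by
  simp [X_add_one_pow_eq_sum_monomial, umbralEval_monomial]

theorem sum_choose_mul_sum_choose_mul_add (f : ℕ → R) (p q : ℕ) :
    ∑ d ∈ range (p + 1), ∑ e ∈ range (q + 1), (p.choose d : R) * (q.choose e : R) * f (d + e) =
      ∑ t ∈ range (p + q + 1), ((p + q).choose t : R) * f t := by
  rw [← umbralEval_X_add_one_pow, pow_add, X_add_one_pow_eq_sum_monomial,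
    X_add_one_pow_eq_sum_monomial, sum_mul_sum]
  simp [monomial_mul_monomial, umbralEval_monomial]

theorem sum_range_choose_mul_add_sub (f : ℕ → R) (m k : ℕ) :
    ∑ j ∈ range (k + 1), (k.choose j : R) * f (k + m - j) =
      ∑ j ∈ range (k + 1), (k.choose j : R) * f (m + j) := by
  rw [← sum_range_reflect]
  refine sum_congr rfl fun j hj => ?_
  have hjk : j ≤ k := Nat.lt_succ_iff.1 (mem_range.1 hj)
  rw [Nat.add_sub_cancel, Nat.choose_symm hjk, show k + m - (k - j) = m + j by omega]

theorem sum_choose_mul_choose_mul (g : ℕ → R) {n k : ℕ} (hk : k ≤ n) :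
    ∑ i ∈ range (n + 1), (n.choose i : R) * (i.choose k : R) * g i =
      (n.choose k : R) * ∑ d ∈ range (n - k + 1), ((n - k).choose d : R) * g (k + d) := by
  rw [show n + 1 = k + (n - k + 1) by omega, sum_range_add, mul_sum]
  have hbelow : ∀ i ∈ range k, (n.choose i : R) * (i.choose k : R) * g i = 0 := fun i hi => by
    simp [Nat.choose_eq_zero_of_lt (mem_range.1 hi)]
  rw [sum_eq_zero hbelow, zero_add]
  refine sum_congr rfl fun d _ => ?_
  have hsub : n.choose (k + d) * (k + d).choose k = n.choose k * (n - k).choose d := by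
    rw [Nat.choose_mul le_self_add, Nat.add_sub_cancel_left]
  rw [← mul_assoc, ← Nat.cast_mul, ← Nat.cast_mul, hsub]

theorem sum_choose_mul_choose_mul_sum_choose_mul_sub (b : ℕ → R) {n k : ℕ} (hk : k ≤ n) :
    ∑ i ∈ range (n + 1), (n.choose i : R) * (i.choose k : R) *
        ∑ j ∈ range (k + 1), (k.choose j : R) * b (i - j) =
      (n.choose k : R) * ∑ t ∈ range (n + 1), (n.choose t : R) * b t := by
  rw [sum_choose_mul_choose_mul _ hk]
  simp only [sum_range_choose_mul_add_sub b]
  have hvandermonde := sum_choose_mul_sum_choose_mul_add b (n - k) k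
  rw [Nat.sub_add_cancel hk] at hvandermonde
  rw [← hvandermonde]
  simp only [mul_sum, mul_assoc]

end

theorem binomial_newton_identity {R : Type*} [CommRing R] (a b : ℕ → R) (n : ℕ) :
    ∑ i ∈ Finset.range (n + 1), (n.choose i : R) *
        (∑ k ∈ Finset.range (i + 1), ∑ j ∈ Finset.range (k + 1),
          (i.choose k : R) * (k.choose j : R) * a k * b (i - j)) =
      (∑ s ∈ Finset.range (n + 1), (n.choose s : R) * a s) *
      (∑ t ∈ Finset.range (n + 1), (n.choose t : R) * b t) := by
  set g : ℕ → ℕ → R := fun k i =>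
    (n.choose i : R) * (i.choose k : R) * ∑ j ∈ range (k + 1), (k.choose j : R) * b (i - j)
  have hrow : ∀ i ∈ range (n + 1), (n.choose i : R) * (∑ k ∈ range (i + 1),
      ∑ j ∈ range (k + 1), (i.choose k : R) * (k.choose j : R) * a k * b (i - j)) =
      ∑ k ∈ range (n + 1), a k * g k i := by
    intro i hi
    have hzero : ∀ k ∈ range (n + 1), k ∉ range (i + 1) → a k * g k i = 0 := fun k _ hk => by
      simp [g, Nat.choose_eq_zero_of_lt (by simpa using hk : i < k)]
    rw [← sum_subset (range_subset_range.2 (mem_range.1 hi)) hzero]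
    simp only [g, mul_sum, mul_assoc, mul_left_comm (a _)]
  have hcol : ∀ k ∈ range (n + 1), ∑ i ∈ range (n + 1), a k * g k i =
      (n.choose k : R) * a k * ∑ t ∈ range (n + 1), (n.choose t : R) * b t := fun k hk => by
    rw [← mul_sum, sum_choose_mul_choose_mul_sum_choose_mul_sub b (mem_range_succ_iff.1 hk),
      mul_left_comm, mul_assoc]
  rw [sum_congr rfl hrow, sum_comm, sum_congr rfl hcol, sum_mul]
end

section
/- The set of all sequences ℕ → R with termwise addition and the Newton product (a ⊠ b)_n = Σ_{i=0}^n Σ_{j=0}^i C(n,i) C(i,j) a_i b_{n-j} forms a commutative R-algebra with multiplicative identity the sequence (1,0,0,...). -/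
open Finset

/-!
The binomial transform `(B a)ₙ = ∑ₖ C(n,k) aₖ` is an injective `R`-linear map that turns the
Newton product into the termwise product. Indeed `(B a)ₙ = ∑_{S ⊆ [n]} a_{|S|}`, the coefficient
`C(n,m) C(m,i) C(i,j)` counts chains `J ⊆ S ⊆ M ⊆ [n]` of sizes `j, i, m`, and
`(J, S, M) ↦ (S, M \ J)` is a bijection onto pairs of subsets of `[n]`, with inverse
`(S, T) ↦ (S \ T, S, S ∪ T)`.
So every algebra law for `newton` is pulled back along `B` from the pointwise algebra `ℕ → R`.
-/

/-- Newton (multinomial convolution) product of sequences. -/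
def newton {R : Type*} [CommRing R] (a b : ℕ → R) : ℕ → R :=
  fun n => ∑ i ∈ Finset.range (n + 1), ∑ j ∈ Finset.range (i + 1),
    (n.choose i : R) * (i.choose j : R) * a i * b (n - j)

theorem Finset.sum_powerset_chain_sdiff {α β : Type*} [DecidableEq α] [AddCommMonoid β]
    (X : Finset α) (f : Finset α → Finset α → β) :
    ∑ M ∈ X.powerset, ∑ S ∈ M.powerset, ∑ J ∈ S.powerset, f S (M \ J) =
      ∑ S ∈ X.powerset, ∑ T ∈ X.powerset, f S T := by
  rw [sum_comm' (t' := X.powerset) (s' := fun S => X.powerset.filter (S ⊆ ·))]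
  · refine sum_congr rfl fun S hS => ?_
    rw [mem_powerset] at hS
    rw [← sum_product']
    refine sum_nbij' (fun p => p.1 \ p.2) (fun T => (S ∪ T, S \ T)) ?_ ?_ ?_ ?_ fun _ _ => rfl
    all_goals simp only [mem_product, mem_filter, mem_powerset, Prod.forall, Prod.mk.injEq]
    · rintro M J ⟨⟨hM, -⟩, -⟩
      exact sdiff_subset.trans hM
    · intro T hT
      exact ⟨⟨union_subset hS hT, subset_union_left⟩, sdiff_subset⟩
    · rintro M J ⟨⟨-, hSM⟩, hJS⟩
      grind
    · intro T _
      grind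
  · intro M S
    simp only [mem_powerset, mem_filter]
    exact ⟨fun ⟨hM, hS⟩ => ⟨⟨hM, hS⟩, hS.trans hM⟩, fun ⟨⟨hM, hS⟩, _⟩ => ⟨hM, hS⟩⟩

section BinomialTransform

variable {R : Type*} [CommRing R]

def binomialTransform : (ℕ → R) →ₗ[R] (ℕ → R) where
  toFun a n := ∑ k ∈ range (n + 1), (n.choose k : R) * a k
  map_add' a b := by ext n; simp only [Pi.add_apply, mul_add, sum_add_distrib]
  map_smul' r a := by
    ext n; simp only [Pi.smul_apply, smul_eq_mul, mul_sum, mul_left_comm, RingHom.id_apply]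

theorem binomialTransform_apply (a : ℕ → R) (n : ℕ) :
    binomialTransform a n = ∑ k ∈ range (n + 1), (n.choose k : R) * a k := rfl

theorem binomialTransform_injective : Function.Injective (binomialTransform (R := R)) := by
  intro a b h
  funext n
  induction n using Nat.strong_induction_on with
  | _ n ih =>
    have hn := congrFun h n
    simp only [binomialTransform_apply, sum_range_succ, Nat.choose_self, Nat.cast_one, one_mul] at hn
    rwa [sum_congr rfl fun k hk => by rw [ih k (mem_range.1 hk)], add_right_inj] at hn

theorem binomialTransform_card {α : Type*} (a : ℕ → R) (X : Finset α) :
    binomialTransform a X.card = ∑ S ∈ X.powerset, a S.card := by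
  simp only [sum_powerset_apply_card, binomialTransform_apply, nsmul_eq_mul]

theorem newton_card {α : Type*} [DecidableEq α] (a b : ℕ → R) (M : Finset α) :
    newton a b M.card = ∑ S ∈ M.powerset, ∑ J ∈ S.powerset, a S.card * b (M \ J).card := by
  have hcard : ∀ S ∈ M.powerset, ∀ J ∈ S.powerset, (M \ J).card = M.card - J.card :=
    fun S hS J hJ => card_sdiff_of_subset ((mem_powerset.1 hJ).trans (mem_powerset.1 hS))
  rw [sum_congr rfl fun S hS => sum_congr rfl fun J hJ => by rw [hcard S hS J hJ],
    sum_congr rfl fun S _ => sum_powerset_apply_card fun j => a S.card * b (M.card - j),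
    sum_powerset_apply_card fun i => ∑ j ∈ range (i + 1), i.choose j • (a i * b (M.card - j))]
  simp only [newton, nsmul_eq_mul, mul_sum, mul_assoc]

theorem binomialTransform_newton (a b : ℕ → R) :
    binomialTransform (newton a b) = binomialTransform a * binomialTransform b := by
  ext n
  rw [← card_range n, Pi.mul_apply, binomialTransform_card, binomialTransform_card,
    binomialTransform_card, sum_mul_sum]
  simp only [newton_card]
  exact sum_powerset_chain_sdiff _ fun S T => a S.card * b T.card

theorem binomialTransform_ite_zero :
    binomialTransform (fun n => if n = 0 then (1 : R) else 0) = 1 := by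
  ext n
  simp [binomialTransform_apply]

end BinomialTransform

/-- Sequences with termwise addition and the Newton product form a commutative
`R`-algebra, with multiplicative identity `(1,0,0,…)`. -/
theorem newton_comm_algebra {R : Type*} [CommRing R] :
    (∀ a b c : ℕ → R, newton (newton a b) c = newton a (newton b c)) ∧
    (∀ a b : ℕ → R, newton a b = newton b a) ∧
    (∀ a b c : ℕ → R, newton a (b + c) = newton a b + newton a c) ∧
    (∀ a b c : ℕ → R, newton (a + b) c = newton a c + newton b c) ∧
    (∀ a : ℕ → R, newton a (fun n => if n = 0 then (1 : R) else 0) = a) ∧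
    (∀ a : ℕ → R, newton (fun n => if n = 0 then (1 : R) else 0) a = a) ∧
    (∀ (r : R) (a b : ℕ → R), newton (r • a) b = r • newton a b) ∧
    (∀ (r : R) (a b : ℕ → R), newton a (r • b) = r • newton a b) := by
  refine ⟨?_, ?_, ?_, ?_, ?_, ?_, ?_, ?_⟩ <;> intros <;> apply binomialTransform_injective <;>
    simp only [binomialTransform_newton, binomialTransform_ite_zero, map_add, map_smul]
  · exact mul_assoc ..
  · exact mul_comm ..
  · exact mul_add ..
  · exact add_mul ..
  · exact mul_one _
  · exact one_mul _
  · exact smul_mul_assoc ..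
  · exact mul_smul_comm ..
end

section
/- The Newton product is associative: for all sequences a, b, c : ℕ → R, (a ⊠ b) ⊠ c = a ⊠ (b ⊠ c). -/
/-!
Regard a sequence `a` as the function `I ↦ a #I` on finite sets. Writing `K = S \ J`, the
Newton product becomes the covering product `(f * g) S = ∑_{I ∪ K = S} f I * g K`. Summing over
all subsets (the zeta transform) turns the covering product into the pointwise product, since
every pair of subsets of `S` covers exactly one subset of `S`, namely its union. The zeta
transform is injective, so the covering product, and with it the Newton product, inherits
associativity from that of multiplication in `R`.
-/

open Finset

section CoverMul

variable {α : Type*} [DecidableEq α]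

def coverMul {R : Type*} [CommSemiring R] (f g : Finset α → R) (S : Finset α) : R :=
  ∑ p ∈ S.powerset ×ˢ S.powerset with p.1 ∪ p.2 = S, f p.1 * g p.2

def zetaTransform {M : Type*} [AddCommMonoid M] (f : Finset α → M) (S : Finset α) : M :=
  ∑ T ∈ S.powerset, f T

lemma sum_powerset_sum_filter_union_eq {M : Type*} [AddCommMonoid M]
    (F : Finset α × Finset α → M) (S : Finset α) :
    ∑ T ∈ S.powerset, ∑ p ∈ T.powerset ×ˢ T.powerset with p.1 ∪ p.2 = T, F p =
      ∑ p ∈ S.powerset ×ˢ S.powerset, F p := by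
  have hunion : ∀ p ∈ S.powerset ×ˢ S.powerset, p.1 ∪ p.2 ∈ S.powerset := fun p hp => by
    simp only [mem_product, mem_powerset] at hp ⊢
    exact union_subset hp.1 hp.2
  rw [← sum_fiberwise_of_maps_to hunion]
  refine sum_congr rfl fun T hT => sum_congr ?_ fun _ _ => rfl
  ext ⟨I, K⟩
  simp only [mem_filter, mem_product, mem_powerset] at hT ⊢
  constructor
  · rintro ⟨-, rfl⟩
    exact ⟨⟨subset_union_left.trans hT, subset_union_right.trans hT⟩, rfl⟩
  · rintro ⟨-, rfl⟩
    exact ⟨⟨subset_union_left, subset_union_right⟩, rfl⟩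

lemma zetaTransform_coverMul {R : Type*} [CommSemiring R] (f g : Finset α → R) (S : Finset α) :
    zetaTransform (coverMul f g) S = zetaTransform f S * zetaTransform g S := by
  rw [zetaTransform, zetaTransform, zetaTransform, sum_mul_sum, ← sum_product']
  exact sum_powerset_sum_filter_union_eq (fun p => f p.1 * g p.2) S

lemma zetaTransform_injective {M : Type*} [AddCancelCommMonoid M] :
    Function.Injective (zetaTransform : (Finset α → M) → Finset α → M) := by
  intro f g hfg
  funext S
  induction S using strongInduction with
  | H S ih =>
    have hS := congrFun hfg S
    rw [zetaTransform, zetaTransform, ← sum_erase_add _ _ (mem_powerset_self S),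
      ← sum_erase_add _ _ (mem_powerset_self S)] at hS
    refine add_left_cancel (hS.trans (congrArg (· + g S) ?_))
    exact sum_congr rfl fun T hT => (ih T (mem_ssubsets.mp hT)).symm

lemma coverMul_assoc {R : Type*} [CommRing R] (f g h : Finset α → R) :
    coverMul (coverMul f g) h = coverMul f (coverMul g h) :=
  zetaTransform_injective <| funext fun S => by simp only [zetaTransform_coverMul, mul_assoc]

lemma union_eq_iff_sdiff_subset {I K S : Finset α} (hI : I ⊆ S) (hK : K ⊆ S) :
    I ∪ K = S ↔ S \ K ⊆ I := by
  rw [sdiff_le_iff, sup_eq_union, union_comm, (union_subset hK hI).ge_iff_eq]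

lemma sum_filter_union_eq_sum_powerset_sdiff {M : Type*} [AddCommMonoid M]
    (g : Finset α → M) {I S : Finset α} (hI : I ⊆ S) :
    ∑ K ∈ S.powerset with I ∪ K = S, g K = ∑ J ∈ I.powerset, g (S \ J) := by
  refine sum_nbij' (S \ ·) (S \ ·) ?_ ?_ ?_ ?_ fun K hK => ?_
  · intro K hK
    simp only [mem_filter, mem_powerset] at hK ⊢
    exact (union_eq_iff_sdiff_subset hI hK.1).mp hK.2
  · intro J hJ
    simp only [mem_filter, mem_powerset] at hJ ⊢
    refine ⟨sdiff_subset, (union_eq_iff_sdiff_subset hI sdiff_subset).mpr ?_⟩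
    rwa [Finset.sdiff_sdiff_eq_self (hJ.trans hI)]
  · intro K hK
    simp only [mem_filter, mem_powerset] at hK
    exact Finset.sdiff_sdiff_eq_self hK.1
  · intro J hJ
    simp only [mem_powerset] at hJ
    exact Finset.sdiff_sdiff_eq_self (hJ.trans hI)
  · simp only [mem_filter, mem_powerset] at hK
    rw [Finset.sdiff_sdiff_eq_self hK.1]

lemma coverMul_card {R : Type*} [CommRing R] (a b : ℕ → R) :
    coverMul (fun I : Finset α => a #I) (fun K => b #K) = fun S => newton a b #S := by
  funext S
  rw [coverMul, sum_filter, sum_product]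
  simp_rw [← sum_filter]
  calc ∑ I ∈ S.powerset, ∑ K ∈ S.powerset with I ∪ K = S, a #I * b #K
      = ∑ I ∈ S.powerset, a #I * ∑ j ∈ range (#I + 1), (#I).choose j • b (#S - j) := by
        refine sum_congr rfl fun I hI => ?_
        rw [← mul_sum, sum_filter_union_eq_sum_powerset_sdiff _ (mem_powerset.mp hI),
          ← sum_powerset_apply_card (fun j => b (#S - j))]
        refine congrArg _ (sum_congr rfl fun J hJ => ?_)
        rw [card_sdiff_of_subset ((mem_powerset.mp hJ).trans (mem_powerset.mp hI))]
    _ = newton a b #S := by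
        rw [sum_powerset_apply_card (fun i => a i * ∑ j ∈ range (i + 1), i.choose j • b (#S - j)),
          newton]
        refine sum_congr rfl fun i _ => ?_
        simp only [nsmul_eq_mul, mul_sum]
        exact sum_congr rfl fun j _ => by ring

end CoverMul

theorem newton_assoc {R : Type*} [CommRing R] (a b c : ℕ → R) :
    newton (newton a b) c = newton a (newton b c) := by
  funext n
  simpa only [coverMul_card, card_range] using
    congrFun (coverMul_assoc (fun I => a #I) (fun K => b #K) (fun L => c #L)) (range n)
end

section
/- The Newton product is commutative: for all sequences a, b : ℕ → R, a ⊠ b = b ⊠ a. -/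
/-! Writing `p = j`, `q = i - j`, `r = n - i`, the coefficient `C(n,i) C(i,j)` is the multinomial
`n! / (p! q! r!)` and the summand is `a (p + q) * b (q + r)`; exchanging `p` and `r`, i.e. the
involution `(i, j) ↦ (n - j, n - i)` of `{j ≤ i ≤ n}`, swaps the roles of `a` and `b`. -/

open Finset

theorem Nat.choose_mul_choose_eq_choose_sub_mul_choose_sub {n i j : ℕ} (hin : i ≤ n)
    (hji : j ≤ i) : n.choose i * i.choose j = n.choose (n - j) * (n - j).choose (n - i) := by
  rw [Nat.choose_mul hji, Nat.choose_symm (hji.trans hin),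
    Nat.choose_symm_of_eq_add (show n - j = (i - j) + (n - i) by omega)]

theorem Finset.sum_range_sum_range_reflect {M : Type*} [AddCommMonoid M] (n : ℕ)
    (f : ℕ → ℕ → M) :
    ∑ i ∈ range (n + 1), ∑ j ∈ range (i + 1), f i j =
      ∑ i ∈ range (n + 1), ∑ j ∈ range (i + 1), f (n - j) (n - i) := by
  simp only [sum_sigma']
  refine sum_nbij' (fun p => ⟨n - p.2, n - p.1⟩) (fun p => ⟨n - p.2, n - p.1⟩)
    ?_ ?_ ?_ ?_ ?_ <;> rintro ⟨i, j⟩ hp <;>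
    simp only [mem_sigma, mem_range, Nat.lt_succ_iff] at hp ⊢
  · omega
  · omega
  all_goals simp only [Nat.sub_sub_self hp.1, Nat.sub_sub_self (hp.2.trans hp.1)]

theorem newton_comm {R : Type*} [CommRing R] (a b : ℕ → R) :
    newton a b = newton b a := by
  funext n
  rw [newton, newton, sum_range_sum_range_reflect n]
  refine sum_congr rfl fun i hi => sum_congr rfl fun j hj => ?_
  have hin : i ≤ n := Nat.lt_succ_iff.mp (mem_range.mp hi)
  have hji : j ≤ i := Nat.lt_succ_iff.mp (mem_range.mp hj)
  have hcoeff :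
      (n.choose i : R) * i.choose j = (n.choose (n - j) : R) * (n - j).choose (n - i) := by
    simpa only [Nat.cast_mul] using
      congrArg (Nat.cast : ℕ → R) (Nat.choose_mul_choose_eq_choose_sub_mul_choose_sub hin hji)
  rw [Nat.sub_sub_self hin, mul_right_comm _ (b _), hcoeff]
end

section
/- If a and b are linear recurrent sequences over a field K whose characteristic polynomials split with roots α_1,...,α_M and β_1,...,β_N (with multiplicity), then the Hurwitz product a ⋆ b is a linear recurrent sequence with characteristic polynomial Π_{i=1}^M Π_{j=1}^N (t - (α_i + β_j)), i.e. the resultant res_x(p_a(x), p_b(t - x)). -/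
open Finset Polynomial

def hurwitz {K : Type*} [Field K] (a b : ℕ → K) : ℕ → K :=
  fun n => ∑ i ∈ Finset.range (n + 1), (n.choose i : K) * a i * b (n - i)

/-- The sequence `a` satisfies the linear recurrence whose characteristic
polynomial is the monic polynomial `p`. -/
def SatisfiesRec {K : Type*} [Field K] (a : ℕ → K) (p : Polynomial K) : Prop :=
  ∀ n, ∑ i ∈ Finset.range (p.natDegree + 1), p.coeff i * a (n + i) = 0

section Aux

variable {K : Type*} [Field K]

/-- The shift operator on sequences, as a linear endomorphism. -/
def shiftE (K : Type*) [Field K] : Module.End K (ℕ → K) where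
  toFun a := fun n => a (n + 1)
  map_add' _ _ := rfl
  map_smul' _ _ := rfl

@[simp] lemma shiftE_apply (a : ℕ → K) (n : ℕ) : shiftE K a n = a (n + 1) := rfl

lemma shiftE_pow_apply (i : ℕ) (a : ℕ → K) (n : ℕ) : (shiftE K ^ i) a n = a (n + i) := by
  induction i generalizing a n with
  | zero => rfl
  | succ i ih =>
    rw [pow_succ, Module.End.mul_apply]
    exact ih _ n

lemma aeval_shiftE_apply (p : Polynomial K) (a : ℕ → K) (n : ℕ) :
    aeval (shiftE K) p a n = ∑ i ∈ Finset.range (p.natDegree + 1), p.coeff i * a (n + i) := by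
  rw [Polynomial.aeval_eq_sum_range]
  rw [LinearMap.coe_sum, Finset.sum_apply, Finset.sum_apply]
  exact Finset.sum_congr rfl fun i _ => by
    simp [shiftE_pow_apply]

lemma satisfiesRec_iff (a : ℕ → K) (p : Polynomial K) :
    SatisfiesRec a p ↔ aeval (shiftE K) p a = 0 := by
  constructor
  · intro h; funext n; rw [aeval_shiftE_apply]; exact h n
  · intro h n; rw [← aeval_shiftE_apply, h]; rfl

lemma aeval_mul_apply (p q : Polynomial K) (x : ℕ → K) :
    aeval (shiftE K) (p * q) x = aeval (shiftE K) p (aeval (shiftE K) q x) := by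
  rw [map_mul]; rfl

@[simp] lemma hurwitz_zero_right (a : ℕ → K) : hurwitz a (0 : ℕ → K) = 0 := by
  funext n; simp [hurwitz]

@[simp] lemma hurwitz_zero_left (b : ℕ → K) : hurwitz (0 : ℕ → K) b = 0 := by
  funext n; simp [hurwitz]

lemma hurwitz_shift (a b : ℕ → K) :
    shiftE K (hurwitz a b) = hurwitz (shiftE K a) b + hurwitz a (shiftE K b) := by
  funext n
  simp only [shiftE_apply, Pi.add_apply, hurwitz]
  rw [Finset.sum_range_succ' (fun i => (((n+1).choose i : K)) * a i * b (n+1-i)) (n+1)]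
  rw [Finset.sum_range_succ' (fun i => ((n.choose i : K)) * a i * b (n-i+1)) n]
  have h1 : ∀ i ∈ Finset.range (n+1),
      (((n+1).choose (i+1) : K)) * a (i+1) * b (n+1-(i+1)) =
        ((n.choose i : K)) * a (i+1) * b (n-i) + ((n.choose (i+1) : K)) * a (i+1) * b (n-i) := by
    intro i hi
    rw [Nat.succ_sub_succ, Nat.choose_succ_succ]
    push_cast
    ring
  rw [Finset.sum_congr rfl h1, Finset.sum_add_distrib]
  have h2 : ∀ i ∈ Finset.range n,
      ((n.choose (i+1) : K)) * a (i+1) * b (n-(i+1)+1) =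
        ((n.choose (i+1) : K)) * a (i+1) * b (n-i) := by
    intro i hi
    simp only [Finset.mem_range] at hi
    congr 2
    omega
  rw [Finset.sum_congr rfl h2]
  rw [Finset.sum_range_succ (fun i => ((n.choose (i+1) : K)) * a (i+1) * b (n-i)) n]
  simp only [Nat.choose_succ_self, Nat.cast_zero, zero_mul, add_zero, Nat.choose_zero_right,
    Nat.cast_one, one_mul, Nat.sub_zero, Nat.add_sub_cancel]
  ring

lemma aeval_linear (c : K) (x : ℕ → K) :
    aeval (shiftE K) (X - C c) x = shiftE K x - c • x := by
  simp [map_sub, Module.algebraMap_end_apply]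

lemma hurwitz_sub_smul_left (c : K) (x y : ℕ → K) (b : ℕ → K) :
    hurwitz (x - c • y) b = hurwitz x b - c • hurwitz y b := by
  funext n
  simp only [hurwitz, Pi.sub_apply, Pi.smul_apply, smul_eq_mul, ← Finset.sum_sub_distrib,
    Finset.mul_sum]
  exact Finset.sum_congr rfl fun i _ => by ring

lemma hurwitz_sub_smul_right (c : K) (a : ℕ → K) (x y : ℕ → K) :
    hurwitz a (x - c • y) = hurwitz a x - c • hurwitz a y := by
  funext n
  simp only [hurwitz, Pi.sub_apply, Pi.smul_apply, smul_eq_mul, ← Finset.sum_sub_distrib,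
    Finset.mul_sum]
  exact Finset.sum_congr rfl fun i _ => by ring

lemma hurwitz_factor (α β : K) (a b : ℕ → K) :
    aeval (shiftE K) (X - C (α + β)) (hurwitz a b) =
      hurwitz (aeval (shiftE K) (X - C α) a) b + hurwitz a (aeval (shiftE K) (X - C β) b) := by
  rw [aeval_linear, aeval_linear, aeval_linear, hurwitz_sub_smul_left, hurwitz_sub_smul_right,
    hurwitz_shift, add_smul]
  abel

lemma main_lemma (s t : Multiset K) (a b : ℕ → K)
    (ha : aeval (shiftE K) (s.map fun c => X - C c).prod a = 0)
    (hb : aeval (shiftE K) (t.map fun c => X - C c).prod b = 0) :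
    aeval (shiftE K)
      ((s.map fun γ => ((t.map fun δ => X - C (γ + δ)).prod)).prod) (hurwitz a b) = 0 := by
  induction s using Multiset.induction generalizing t a b with
  | empty =>
    simp only [Multiset.map_zero, Multiset.prod_zero, map_one, Module.End.one_apply] at ha ⊢
    rw [ha, hurwitz_zero_left]
  | cons α s ih =>
    -- first extract that (D - α) a is annihilated by s
    have ha' : aeval (shiftE K) (s.map fun c => X - C c).prod
        (aeval (shiftE K) (X - C α) a) = 0 := by
      rw [Multiset.map_cons, Multiset.prod_cons, mul_comm, aeval_mul_apply] at ha
      exact ha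
    induction t using Multiset.induction generalizing b with
    | empty =>
      simp only [Multiset.map_zero, Multiset.prod_zero, map_one, Module.End.one_apply] at hb ⊢
      rw [hb, hurwitz_zero_right]
      simp
    | cons β t iht =>
      have hb' : aeval (shiftE K) (t.map fun c => X - C c).prod
          (aeval (shiftE K) (X - C β) b) = 0 := by
        rw [Multiset.map_cons, Multiset.prod_cons, mul_comm, aeval_mul_apply] at hb
        exact hb
      set a' := aeval (shiftE K) (X - C α) a with ha'def
      set b' := aeval (shiftE K) (X - C β) b with hb'def
      -- rewrite the big product
      have key : ((α ::ₘ s).map fun γ => (((β ::ₘ t).map fun δ => X - C (γ + δ)).prod)).prod =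
          (((t.map fun δ => X - C (α + δ)).prod) *
            (s.map fun γ => ((β ::ₘ t).map fun δ => X - C (γ + δ)).prod).prod) * (X - C (α + β)) := by
        rw [Multiset.map_cons, Multiset.prod_cons, Multiset.map_cons, Multiset.prod_cons]
        ring
      rw [key, aeval_mul_apply, hurwitz_factor, map_add]
      have term1 : aeval (shiftE K)
          ((s.map fun γ => ((β ::ₘ t).map fun δ => X - C (γ + δ)).prod).prod)
          (hurwitz a' b) = 0 := ih (β ::ₘ t) a' b ha' hb
      have term2 : aeval (shiftE K)
          (((α ::ₘ s)).map fun γ => ((t.map fun δ => X - C (γ + δ)).prod)).prod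
          (hurwitz a b') = 0 := iht b' hb'
      have key2 : ((t.map fun δ => X - C (α + δ)).prod) *
            (s.map fun γ => ((β ::ₘ t).map fun δ => X - C (γ + δ)).prod).prod =
          (s.map fun γ => X - C (γ + β)).prod *
            (((α ::ₘ s)).map fun γ => ((t.map fun δ => X - C (γ + δ)).prod)).prod := by
        simp only [Multiset.map_cons, Multiset.prod_cons]
        rw [Multiset.prod_map_mul]
        ring
      have e1 : aeval (shiftE K) (((t.map fun δ => X - C (α + δ)).prod) *
            (s.map fun γ => ((β ::ₘ t).map fun δ => X - C (γ + δ)).prod).prod)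
          (hurwitz a' b) = 0 := by
        rw [aeval_mul_apply, term1, map_zero]
      have e2 : aeval (shiftE K) (((t.map fun δ => X - C (α + δ)).prod) *
            (s.map fun γ => ((β ::ₘ t).map fun δ => X - C (γ + δ)).prod).prod)
          (hurwitz a b') = 0 := by
        rw [key2, aeval_mul_apply, term2, map_zero]
      rw [e1, e2, add_zero]

end Aux

/-- If `a` and `b` recur with characteristic polynomials splitting with roots
`α_i` and `β_j`, then `a ⋆ b` recurs with characteristic polynomial
`∏_{i,j} (t - (α_i + β_j)) = res_x(p_a(x), p_b(t - x))`. -/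
theorem hurwitz_linear_recurrent {K : Type*} [Field K] {M N : ℕ} (hM : 0 < M) (hN : 0 < N)
    (a b : ℕ → K) (α : Fin M → K) (β : Fin N → K)
    (ha : SatisfiesRec a (∏ i, (X - C (α i))))
    (hb : SatisfiesRec b (∏ j, (X - C (β j)))) :
    SatisfiesRec (hurwitz a b) (∏ i, ∏ j, (X - C (α i + β j))) := by
  rw [satisfiesRec_iff] at ha hb ⊢
  have hs : ((Multiset.map α Finset.univ.val).map fun c => X - C c).prod
      = ∏ i, (X - C (α i)) := by
    rw [Multiset.map_map, ← Finset.prod_eq_multiset_prod]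
    rfl
  have ht : ((Multiset.map β Finset.univ.val).map fun c => X - C c).prod
      = ∏ j, (X - C (β j)) := by
    rw [Multiset.map_map, ← Finset.prod_eq_multiset_prod]
    rfl
  have hR : ((Multiset.map α Finset.univ.val).map fun γ =>
        ((Multiset.map β Finset.univ.val).map fun δ => X - C (γ + δ)).prod).prod
      = ∏ i, ∏ j, (X - C (α i + β j)) := by
    rw [Multiset.map_map, ← Finset.prod_eq_multiset_prod]
    refine Finset.prod_congr rfl fun i _ => ?_
    show ((Multiset.map β Finset.univ.val).map fun δ => X - C (α i + δ)).prod = _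
    rw [Multiset.map_map, ← Finset.prod_eq_multiset_prod]
    rfl
  rw [← hR]
  exact main_lemma _ _ a b (by rw [hs]; exact ha) (by rw [ht]; exact hb)
end

section
/- The set W(R) of linear recurrent sequences over a commutative ring R is closed under the Newton product: if a and b are linear recurrent sequences, then a ⊠ b is a linear recurrent sequence. -/
open Finset

def IsLinRec {R : Type*} [CommRing R] (a : ℕ → R) : Prop :=
  ∃ N : ℕ, 1 ≤ N ∧ ∃ h : ℕ → R, ∀ n, N ≤ n →
    a n = ∑ i ∈ Finset.range N, h i * a (n - 1 - i)

namespace NewtonAux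
variable {R : Type*} [CommRing R]

def Bf (b : ℕ → R) (i m : ℕ) : R := ∑ j ∈ range (i+1), (i.choose j : R) * b (m - j)

lemma newton_eq (a b : ℕ → R) (n : ℕ) :
    newton a b n = ∑ i ∈ range (n+1), (n.choose i : R) * a i * Bf b i n := by
  unfold newton Bf
  refine Finset.sum_congr rfl fun i hi => ?_
  rw [Finset.mul_sum]
  exact Finset.sum_congr rfl fun j hj => by ring

lemma Bf_succ (b : ℕ → R) (i n : ℕ) :
    Bf b (i+1) (n+1) = Bf b i n + Bf b i (n+1) := by
  have hext : ∑ j ∈ range (i+2), (i.choose j : R) * b (n+1-j) = Bf b i (n+1) := by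
    rw [Finset.sum_range_succ, Nat.choose_succ_self]
    simp [Bf]
  have h1 : Bf b i (n+1) = (∑ j ∈ range (i+1), (i.choose (j+1) : R) * b (n - j)) + b (n+1) := by
    rw [← hext, Finset.sum_range_succ']
    simp [Nat.succ_sub_succ]
  rw [Bf, Finset.sum_range_succ']
  simp only [Nat.succ_sub_succ, Nat.sub_zero, Nat.choose_zero_right, Nat.cast_one, one_mul]
  have h2 : ∀ j ∈ range (i+1), ((i+1).choose (j+1) : R) * b (n-j)
      = (i.choose j : R) * b (n-j) + (i.choose (j+1) : R) * b (n-j) := by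
    intro j _
    rw [Nat.choose_succ_succ]
    push_cast; ring
  rw [Finset.sum_congr rfl h2, Finset.sum_add_distrib, h1, Bf]
  ring

lemma newton_succ (a b : ℕ → R) (n : ℕ) :
    newton a b (n+1) = newton (fun m => a (m+1)) b n + newton a (fun m => b (m+1)) n
      + newton (fun m => a (m+1)) (fun m => b (m+1)) n := by
  have key : ∀ i ∈ range (n+1),
      (((n+1).choose (i+1) : R)) * a (i+1) * Bf b (i+1) (n+1)
        = ((n.choose i : R) * a (i+1) * Bf b i n
          + (n.choose i : R) * a (i+1) * Bf b i (n+1))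
          + (n.choose (i+1) : R) * a (i+1) * Bf b (i+1) (n+1) := by
    intro i _
    rw [Nat.choose_succ_succ (n := n) (k := i)]
    push_cast
    rw [Bf_succ]
    ring
  have hL : newton a b (n+1)
      = (∑ i ∈ range (n+1), ((n+1).choose (i+1) : R) * a (i+1) * Bf b (i+1) (n+1))
        + a 0 * b (n+1) := by
    rw [newton_eq, Finset.sum_range_succ']
    simp [Bf]
  have hT4 : (∑ i ∈ range (n+1), (n.choose (i+1) : R) * a (i+1) * Bf b (i+1) (n+1))
      + a 0 * b (n+1) = ∑ i ∈ range (n+1), (n.choose i : R) * a i * Bf b i (n+1) := by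
    have h5 : ∑ i ∈ range (n+2), (n.choose i : R) * a i * Bf b i (n+1)
        = ∑ i ∈ range (n+1), (n.choose i : R) * a i * Bf b i (n+1) := by
      rw [Finset.sum_range_succ, Nat.choose_succ_self]
      simp
    rw [← h5]
    conv_rhs => rw [Finset.sum_range_succ']
    simp [Bf]
  have hR1 : newton (fun m => a (m+1)) b n
      = ∑ i ∈ range (n+1), (n.choose i : R) * a (i+1) * Bf b i n := newton_eq _ b n
  have hR2 : newton a (fun m => b (m+1)) n
      = ∑ i ∈ range (n+1), (n.choose i : R) * a i * Bf b i (n+1) := by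
    rw [newton_eq]
    refine Finset.sum_congr rfl fun i hi => ?_
    have hBf : Bf (fun m => b (m+1)) i n = Bf b i (n+1) := by
      refine Finset.sum_congr rfl fun j hj => ?_
      have hj' : j ≤ i := by simp at hj; omega
      have hi' : i ≤ n := by simp at hi; omega
      have : n - j + 1 = n + 1 - j := by omega
      simp only [this]
    rw [hBf]
  have hR3 : newton (fun m => a (m+1)) (fun m => b (m+1)) n
      = ∑ i ∈ range (n+1), (n.choose i : R) * a (i+1) * Bf b i (n+1) := by
    rw [newton_eq]
    refine Finset.sum_congr rfl fun i hi => ?_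
    have hBf : Bf (fun m => b (m+1)) i n = Bf b i (n+1) := by
      refine Finset.sum_congr rfl fun j hj => ?_
      have hj' : j ≤ i := by simp at hj; omega
      have hi' : i ≤ n := by simp at hi; omega
      have : n - j + 1 = n + 1 - j := by omega
      simp only [this]
    rw [hBf]
  rw [hL, Finset.sum_congr rfl key, Finset.sum_add_distrib, Finset.sum_add_distrib,
    hR1, hR2, hR3]
  linear_combination hT4


variable {R : Type*} [CommRing R]

lemma newton_sum_left {ι : Type*} (s : Finset ι) (c : ι → R) (f : ι → ℕ → R)
    (F g : ℕ → R) (hF : ∀ m, F m = ∑ k ∈ s, c k * f k m) (n : ℕ) :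
    newton F g n = ∑ k ∈ s, c k * newton (f k) g n := by
  calc newton F g n
      = ∑ i ∈ range (n+1), ∑ j ∈ range (i+1), ∑ k ∈ s,
          c k * ((n.choose i : R) * (i.choose j : R) * f k i * g (n-j)) := by
        unfold newton
        refine Finset.sum_congr rfl fun i _ => Finset.sum_congr rfl fun j _ => ?_
        rw [hF i]
        simp only [Finset.mul_sum, Finset.sum_mul]
        exact Finset.sum_congr rfl fun k _ => by ring
    _ = ∑ k ∈ s, ∑ i ∈ range (n+1), ∑ j ∈ range (i+1),
          c k * ((n.choose i : R) * (i.choose j : R) * f k i * g (n-j)) := by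
        rw [Finset.sum_congr rfl fun i (_ : i ∈ range (n+1)) => Finset.sum_comm, Finset.sum_comm]
    _ = ∑ k ∈ s, c k * newton (f k) g n := by
        refine Finset.sum_congr rfl fun k _ => ?_
        unfold newton
        rw [Finset.mul_sum]
        refine Finset.sum_congr rfl fun i _ => ?_
        rw [Finset.mul_sum]

lemma newton_sum_right {ι : Type*} (s : Finset ι) (c : ι → R) (g : ι → ℕ → R)
    (f G : ℕ → R) (hG : ∀ m, G m = ∑ k ∈ s, c k * g k m) (n : ℕ) :
    newton f G n = ∑ k ∈ s, c k * newton f (g k) n := by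
  calc newton f G n
      = ∑ i ∈ range (n+1), ∑ j ∈ range (i+1), ∑ k ∈ s,
          c k * ((n.choose i : R) * (i.choose j : R) * f i * g k (n-j)) := by
        unfold newton
        refine Finset.sum_congr rfl fun i _ => Finset.sum_congr rfl fun j _ => ?_
        rw [hG (n-j)]
        simp only [Finset.mul_sum, Finset.sum_mul]
        exact Finset.sum_congr rfl fun k _ => by ring
    _ = ∑ k ∈ s, ∑ i ∈ range (n+1), ∑ j ∈ range (i+1),
          c k * ((n.choose i : R) * (i.choose j : R) * f i * g k (n-j)) := by
        rw [Finset.sum_congr rfl fun i (_ : i ∈ range (n+1)) => Finset.sum_comm, Finset.sum_comm]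
    _ = ∑ k ∈ s, c k * newton f (g k) n := by
        refine Finset.sum_congr rfl fun k _ => ?_
        unfold newton
        rw [Finset.mul_sum]
        refine Finset.sum_congr rfl fun i _ => ?_
        rw [Finset.mul_sum]

lemma isLinRec_of_matrix {ι : Type*} [Fintype ι] [DecidableEq ι] [Nonempty ι]
    (u : ι → ℕ → R) (C : Matrix ι ι R)
    (hu : ∀ i m, u i (m + 1) = ∑ j, C i j * u j m) (i₀ : ι) :
    IsLinRec (u i₀) := by
  rcases subsingleton_or_nontrivial R with hR | hR
  · exact ⟨1, le_refl 1, fun _ => 0, fun n _ => Subsingleton.elim _ _⟩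
  have hpow : ∀ (n : ℕ) (i : ι) (m : ℕ), u i (m + n) = ∑ j, (C ^ n) i j * u j m := by
    intro n
    induction n with
    | zero => intro i m; simp [Matrix.one_apply]
    | succ n ih =>
      intro i m
      have h1 : m + (n+1) = (m+1) + n := by omega
      rw [h1, ih i (m+1)]
      calc ∑ j, (C^n) i j * u j (m+1)
          = ∑ j, ∑ k, (C^n) i j * (C j k * u k m) := by
            refine Finset.sum_congr rfl fun j _ => ?_
            rw [hu j m, Finset.mul_sum]
        _ = ∑ k, (∑ j, (C^n) i j * C j k) * u k m := by
            rw [Finset.sum_comm]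
            refine Finset.sum_congr rfl fun k _ => ?_
            rw [Finset.sum_mul]
            exact Finset.sum_congr rfl fun j _ => by ring
        _ = ∑ k, (C^(n+1)) i k * u k m := by
            refine Finset.sum_congr rfl fun k _ => ?_
            rw [pow_succ, Matrix.mul_apply]
  set P := C.charpoly with hPdef
  set p := Fintype.card ι with hp_def
  have hp : 1 ≤ p := Fintype.card_pos
  have hmon : P.Monic := C.charpoly_monic
  have hdeg : P.natDegree = p := C.charpoly_natDegree_eq_dim
  have hz : (Polynomial.aeval C) P = 0 := C.aeval_self_charpoly
  rw [Polynomial.aeval_eq_sum_range, hdeg, Finset.sum_range_succ] at hz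
  have hcoeff : P.coeff p = 1 := by rw [← hdeg]; exact hmon.coeff_natDegree
  rw [hcoeff, one_smul] at hz
  have hCp : ∀ i j, (C ^ p) i j = ∑ k ∈ range p, (-P.coeff k) * (C ^ k) i j := by
    intro i j
    have h : (∑ k ∈ range p, P.coeff k • C ^ k) i j + (C ^ p) i j = 0 := by
      have := congrArg (fun M : Matrix ι ι R => M i j) hz
      simpa using this
    rw [Matrix.sum_apply] at h
    simp only [Matrix.smul_apply, smul_eq_mul] at h
    have h2 : (C ^ p) i j = -∑ k ∈ range p, P.coeff k * (C ^ k) i j := by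
      linear_combination h
    rw [h2, ← Finset.sum_neg_distrib]
    exact Finset.sum_congr rfl fun k _ => by ring
  refine ⟨p, hp, fun t => -(P.coeff (p - 1 - t)), fun n hn => ?_⟩
  have hn' : n = (n - p) + p := by omega
  calc u i₀ n = u i₀ ((n - p) + p) := by rw [← hn']
    _ = ∑ j, (C ^ p) i₀ j * u j (n - p) := hpow p i₀ (n - p)
    _ = ∑ j, (∑ k ∈ range p, (-P.coeff k) * (C ^ k) i₀ j) * u j (n - p) := by
        exact Finset.sum_congr rfl fun j _ => by rw [hCp]
    _ = ∑ k ∈ range p, (-P.coeff k) * u i₀ ((n - p) + k) := by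
        simp only [Finset.sum_mul]
        rw [Finset.sum_comm]
        refine Finset.sum_congr rfl fun k _ => ?_
        rw [hpow k i₀ (n - p), Finset.mul_sum]
        exact Finset.sum_congr rfl fun j _ => by ring
    _ = ∑ t ∈ range p, -(P.coeff (p - 1 - t)) * u i₀ (n - 1 - t) := by
        conv_lhs => rw [← Finset.sum_range_reflect]
        refine Finset.sum_congr rfl fun t ht => ?_
        rw [Finset.mem_range] at ht
        have e1 : (n - p) + (p - 1 - t) = n - 1 - t := by omega
        rw [e1]



lemma reduce (a : ℕ → R) {N : ℕ} (f : ℕ → R)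
    (hf : ∀ n, N ≤ n → a n = ∑ i ∈ range N, f i * a (n - 1 - i)) :
    ∃ A : Fin N → Fin N → R, ∀ (i : Fin N) (m : ℕ),
      a (m + ((i : ℕ) + 1)) = ∑ k, A i k * a (m + (k : ℕ)) := by
  refine ⟨fun i k => if hik : (i : ℕ) + 1 < N then (if k = ⟨(i : ℕ) + 1, hik⟩ then 1 else 0)
    else f (N - 1 - (k : ℕ)), fun i m => ?_⟩
  by_cases hik : (i : ℕ) + 1 < N
  · simp only [dif_pos hik, ite_mul, one_mul, zero_mul]
    rw [Finset.sum_ite_eq' univ (⟨(i : ℕ) + 1, hik⟩ : Fin N) (fun k => a (m + (k : ℕ)))]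
    simp
  · have hiN : (i : ℕ) + 1 = N := by have := i.isLt; omega
    simp only [dif_neg hik]
    rw [hiN, hf (m + N) (by omega)]
    rw [Fin.sum_univ_eq_sum_range (fun k => f (N - 1 - k) * a (m + k)) N]
    conv_rhs => rw [← Finset.sum_range_reflect]
    refine Finset.sum_congr rfl fun t ht => ?_
    rw [Finset.mem_range] at ht
    have e1 : N - 1 - (N - 1 - t) = t := by omega
    have e2 : m + (N - 1 - t) = m + N - 1 - t := by omega
    rw [e1, e2]

end NewtonAux

theorem newton_closed {R : Type*} [CommRing R] (a b : ℕ → R)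
    (ha : IsLinRec a) (hb : IsLinRec b) : IsLinRec (newton a b) := by
  obtain ⟨Na, hNa, f, hf⟩ := ha
  obtain ⟨Nb, hNb, g, hg⟩ := hb
  obtain ⟨A, hA⟩ := NewtonAux.reduce a f hf
  obtain ⟨B, hB⟩ := NewtonAux.reduce b g hg
  haveI : Nonempty (Fin Na × Fin Nb) := ⟨(⟨0, hNa⟩, ⟨0, hNb⟩)⟩
  set u : Fin Na × Fin Nb → ℕ → R :=
    fun p => newton (fun m => a (m + (p.1 : ℕ))) (fun m => b (m + (p.2 : ℕ))) with hu_def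
  set Cm : Matrix (Fin Na × Fin Nb) (Fin Na × Fin Nb) R := fun p q =>
    A p.1 q.1 * (if q.2 = p.2 then 1 else 0) + (if q.1 = p.1 then 1 else 0) * B p.2 q.2
      + A p.1 q.1 * B p.2 q.2 with hCm_def
  have hu : ∀ p m, u p (m + 1) = ∑ q, Cm p q * u q m := by
    rintro ⟨i, j⟩ m
    have hFa : ∀ m', a (m' + 1 + (i : ℕ)) = ∑ k, A i k * a (m' + (k : ℕ)) := by
      intro m'
      rw [show m' + 1 + (i : ℕ) = m' + ((i : ℕ) + 1) from by omega]
      exact hA i m'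
    have hGb : ∀ m', b (m' + 1 + (j : ℕ)) = ∑ l, B j l * b (m' + (l : ℕ)) := by
      intro m'
      rw [show m' + 1 + (j : ℕ) = m' + ((j : ℕ) + 1) from by omega]
      exact hB j m'
    have t1 : newton (fun m' => a (m' + 1 + (i : ℕ))) (fun m' => b (m' + (j : ℕ))) m
        = ∑ k, A i k * newton (fun m' => a (m' + (k : ℕ))) (fun m' => b (m' + (j : ℕ))) m :=
      NewtonAux.newton_sum_left univ (A i) (fun k => fun m' => a (m' + (k : ℕ))) _ _ hFa m
    have t2 : newton (fun m' => a (m' + (i : ℕ))) (fun m' => b (m' + 1 + (j : ℕ))) m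
        = ∑ l, B j l * newton (fun m' => a (m' + (i : ℕ))) (fun m' => b (m' + (l : ℕ))) m :=
      NewtonAux.newton_sum_right univ (B j) (fun l => fun m' => b (m' + (l : ℕ))) _ _ hGb m
    have t3 : newton (fun m' => a (m' + 1 + (i : ℕ))) (fun m' => b (m' + 1 + (j : ℕ))) m
        = ∑ k, ∑ l, A i k * (B j l *
            newton (fun m' => a (m' + (k : ℕ))) (fun m' => b (m' + (l : ℕ))) m) := by
      rw [NewtonAux.newton_sum_left univ (A i) (fun k => fun m' => a (m' + (k : ℕ))) _ _ hFa m]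
      refine Finset.sum_congr rfl fun k _ => ?_
      rw [NewtonAux.newton_sum_right univ (B j) (fun l => fun m' => b (m' + (l : ℕ))) _ _ hGb m,
        Finset.mul_sum]
    have hL : u (i, j) (m + 1)
        = newton (fun m' => a (m' + 1 + (i : ℕ))) (fun m' => b (m' + (j : ℕ))) m
          + newton (fun m' => a (m' + (i : ℕ))) (fun m' => b (m' + 1 + (j : ℕ))) m
          + newton (fun m' => a (m' + 1 + (i : ℕ))) (fun m' => b (m' + 1 + (j : ℕ))) m := by
      simp only [hu_def]
      rw [NewtonAux.newton_succ]
    rw [hL, t1, t2, t3, Fintype.sum_prod_type]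
    simp only [hCm_def, hu_def, add_mul, Finset.sum_add_distrib, ite_mul, one_mul, zero_mul,
      mul_ite, mul_one, mul_zero]
    rw [Finset.sum_comm (s := univ) (t := univ)
      (f := fun k l => if k = i then B j l * newton (fun m' => a (m' + (k : ℕ)))
        (fun m' => b (m' + (l : ℕ))) m else 0)]
    simp only [Finset.sum_ite_eq', Finset.mem_univ, if_true]
    congr 1
    exact Finset.sum_congr rfl fun k _ => Finset.sum_congr rfl fun l _ => (mul_assoc _ _ _).symm
  have key := NewtonAux.isLinRec_of_matrix u Cm hu (⟨0, hNa⟩, ⟨0, hNb⟩)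
  have hu0 : u (⟨0, hNa⟩, ⟨0, hNb⟩) = newton a b := by
    simp only [hu_def]
    norm_num
  rwa [hu0] at key
end
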